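/- Assume O_X is nonempty, and let f : B_X → ℝ be continuous. Then the Perron–Bremermann envelope PB_f : X → (−∞, ∞] is bounded below, lower semicontinuous, and satisfies PB_f(z) ≤ ∫_X PB_f dμ for every z ∈ X and every μ ∈ J_z (the integral taken in (−∞, ∞]). (Part (1) of the paper's proposition on Perron–Bremermann envelopes.) -/
import Mathlib


open MeasureTheory Topology Metric Set ENNReal

noncomputable instance (n : ℕ) : MeasurableSpace (EuclideanSpace ℂ (Fin n)) := borel _
instance (n : ℕ) : BorelSpace (EuclideanSpace ℂ (Fin n)) := ⟨rfl⟩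

/-- The positive part of an extended real number, as an element of `ℝ≥0∞`. -/
noncomputable def EReal.toENNReal' (x : EReal) : ℝ≥0∞ :=
  if x = ⊤ then ⊤ else ENNReal.ofReal x.toReal

/-- The integral of an `EReal`-valued function: the integral of its positive part minus the
integral of its negative part (computed in `EReal`). -/
noncomputable def eint {α : Type*} [MeasurableSpace α] (μ : Measure α) (u : α → EReal) : EReal :=
  ((∫⁻ x, (u x).toENNReal' ∂μ : ℝ≥0∞) : EReal) - ((∫⁻ x, (-u x).toENNReal' ∂μ : ℝ≥0∞) : EReal)

/-- The (closed) support of a measure: points all of whose open neighbourhoods have positive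
measure. -/
def msupp {α : Type*} [TopologicalSpace α] [MeasurableSpace α] (μ : Measure α) : Set α :=
  {x | ∀ U : Set α, IsOpen U → x ∈ U → 0 < μ U}

/-- The class `SH(J)`: upper semicontinuous functions with values in `[-∞, ∞)` satisfying the
sub-mean value inequality with respect to every measure in every `J z`. -/
def IsSH {α : Type*} [TopologicalSpace α] [MeasurableSpace α]
    (J : α → Set (Measure α)) (u : α → EReal) : Prop :=
  UpperSemicontinuous u ∧ (∀ z, u z ≠ ⊤) ∧ ∀ z, ∀ μ ∈ J z, u z ≤ eint μ u

/-- Continuous real-valued members of `SH(J)`. -/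
def IsSHR {α : Type*} [TopologicalSpace α] [MeasurableSpace α]
    (J : α → Set (Measure α)) (u : α → ℝ) : Prop :=
  Continuous u ∧ IsSH J (fun x => (u x : EReal))

/-- The Choquet boundary: points whose only Jensen measure is the Dirac measure. -/
def choquet {α : Type*} [TopologicalSpace α] [MeasurableSpace α]
    (J : α → Set (Measure α)) : Set α := {z | J z = {Measure.dirac z}}

/-- `z` is a peak point: there is `u ∈ SH(J)` with `u z = 0` and `u < 0` elsewhere. -/
def IsPeakPt {α : Type*} [TopologicalSpace α] [MeasurableSpace α]
    (J : α → Set (Measure α)) (z : α) : Prop :=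
  ∃ u : α → EReal, IsSH J u ∧ u z = 0 ∧ ∀ w, w ≠ z → u w < 0

/-- The harmonic measure `ω(z, E, X)`. -/
noncomputable def hm {α : Type*} [TopologicalSpace α] [MeasurableSpace α]
    (J : α → Set (Measure α)) (z : α) (E : Set α) : ℝ≥0∞ :=
  ⨅ (V : Set α) (_ : IsOpen V) (_ : E ⊆ V), ⨆ μ ∈ J z, μ V

/-- The Perron–Bremermann envelope of `f` relative to the Šilov boundary
`closure (choquet J)`. -/
noncomputable def PB {α : Type*} [TopologicalSpace α] [MeasurableSpace α]
    (J : α → Set (Measure α)) (f : α → ℝ) (z : α) : EReal :=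
  sSup {r : EReal | ∃ v : α → ℝ, IsSHR J v ∧ (∀ x ∈ closure (choquet J), v x ≤ f x) ∧
    (v z : EReal) = r}


lemma toENNReal'_mono {x y : EReal} (h : x ≤ y) : x.toENNReal' ≤ y.toENNReal' := by
  rcases eq_or_ne y ⊤ with hy | hy
  · simp [EReal.toENNReal', hy]
  have hx : x ≠ ⊤ := fun h' => hy (top_le_iff.mp (h' ▸ h))
  simp only [EReal.toENNReal', if_neg hx, if_neg hy]
  rcases eq_or_ne x ⊥ with hb | hb
  · simp [hb]
  exact ENNReal.ofReal_le_ofReal (EReal.toReal_le_toReal h hb hy)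

lemma eint_mono {α : Type*} [MeasurableSpace α] (μ : Measure α) {u w : α → EReal}
    (h : ∀ x, u x ≤ w x) : eint μ u ≤ eint μ w := by
  unfold eint
  apply EReal.sub_le_sub
  · exact_mod_cast lintegral_mono fun x => toENNReal'_mono (h x)
  · exact_mod_cast lintegral_mono fun x => toENNReal'_mono (EReal.neg_le_neg_iff.mpr (h x))

lemma eint_const {α : Type*} [MeasurableSpace α] (μ : Measure α) [IsProbabilityMeasure μ]
    (c : ℝ) : eint μ (fun _ => (c : EReal)) = (c : EReal) := by
  have h1 : ((c : EReal)).toENNReal' = ENNReal.ofReal c := by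
    simp [EReal.toENNReal']
  have h2 : (-(c : EReal)).toENNReal' = ENNReal.ofReal (-c) := by
    rw [← EReal.coe_neg]; simp [EReal.toENNReal']
  simp only [eint, h1, h2, lintegral_const, measure_univ, mul_one]
  rw [EReal.coe_ennreal_ofReal, EReal.coe_ennreal_ofReal, ← EReal.coe_sub, EReal.coe_eq_coe_iff]
  rcases le_total c 0 with h | h
  · simp [max_eq_right h, max_eq_left (neg_nonneg.2 h)]
  · simp [max_eq_left h, max_eq_right (neg_nonpos.2 h)]

lemma isSHR_const {α : Type*} [TopologicalSpace α] [MeasurableSpace α]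
    (J : α → Set (Measure α)) (hprob : ∀ z, ∀ μ ∈ J z, IsProbabilityMeasure μ) (c : ℝ) :
    IsSHR J (fun _ => c) := by
  refine ⟨continuous_const, ?_, fun z => EReal.coe_ne_top c, fun z μ hμ => ?_⟩
  · exact fun s hs => by simpa using upperSemicontinuous_const (f := fun _ : α => (c : EReal)) s hs
  · haveI := hprob z μ hμ
    rw [eint_const μ c]

theorem PB_lsc_and_submean {n : ℕ} (X : Set (EuclideanSpace ℂ (Fin n)))
    (hXc : IsCompact X) (hXne : X.Nonempty)
    (J : ∀ _ : ↑X, Set (Measure ↑X))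
    (hprob : ∀ z : ↑X, ∀ μ ∈ J z, IsProbabilityMeasure μ)
    (hdirac : ∀ z : ↑X, Measure.dirac z ∈ J z)
    (hO : (choquet J).Nonempty) (f : ↑X → ℝ) (hf : ContinuousOn f (closure (choquet J))) :
    (∃ c : ℝ, ∀ z : ↑X, (c : EReal) ≤ PB J f z) ∧
    LowerSemicontinuous (PB J f) ∧
    ∀ z : ↑X, ∀ μ ∈ J z, PB J f z ≤ eint μ (PB J f) := by
  haveI : CompactSpace ↑X := isCompact_iff_compactSpace.mp hXc
  have hBc : IsCompact (closure (choquet J)) := isClosed_closure.isCompact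
  have hBne : (closure (choquet J)).Nonempty := hO.mono subset_closure
  obtain ⟨x0, hx0, hmin⟩ := hBc.exists_isMinOn hBne hf
  have hmem : ∀ z : ↑X, (f x0 : EReal) ∈ {r : EReal | ∃ v : ↑X → ℝ, IsSHR J v ∧
      (∀ x ∈ closure (choquet J), v x ≤ f x) ∧ ((v z : ℝ) : EReal) = r} :=
    fun z => ⟨fun _ => f x0, isSHR_const J hprob (f x0), fun x hx => hmin hx, rfl⟩
  have hle : ∀ (v : ↑X → ℝ), IsSHR J v → (∀ x ∈ closure (choquet J), v x ≤ f x) →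
      ∀ z : ↑X, (v z : EReal) ≤ PB J f z :=
    fun v hv hvf z => le_sSup ⟨v, hv, hvf, rfl⟩
  refine ⟨⟨f x0, fun z => le_sSup (hmem z)⟩, ?_, ?_⟩
  · intro z y hy
    obtain ⟨r, ⟨v, hv, hvf, rfl⟩, hr⟩ := lt_sSup_iff.mp hy
    have hcont : Continuous fun w : ↑X => ((v w : ℝ) : EReal) :=
      continuous_coe_real_ereal.comp hv.1
    have hU : IsOpen {w : ↑X | y < ((v w : ℝ) : EReal)} := isOpen_Ioi.preimage hcont
    filter_upwards [hU.mem_nhds hr] with w hw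
    exact lt_of_lt_of_le hw (hle v hv hvf w)
  · intro z μ hμ
    apply sSup_le
    rintro r ⟨v, hv, hvf, rfl⟩
    calc ((v z : ℝ) : EReal) ≤ eint μ (fun x => ((v x : ℝ) : EReal)) := hv.2.2.2 z μ hμ
      _ ≤ eint μ (PB J f) := eint_mono μ fun x => hle v hv hvf x
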